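/- arXiv:2009.10276 — 4 statements merged into one kernel-verified Lean document; each statement's English description precedes it below -/
import Mathlib

section
/- Let A be a positive definite operator on a Hilbert space with mI ≤ A ≤ MI for constants 0 < m ≤ M, and let Ψ be a positive unital linear map. Then for every t > 0, Ψ(A) ≤ t·Ψ(A⁻¹)⁻¹ + ρ_{M,m}(t)·I, where ρ_{M,m}(t) = (1−t)m if t ≥ M/m, ρ_{M,m}(t) = M + m − 2√(tMm) if m/M ≤ t ≤ M/m, and ρ_{M,m}(t) = (1−t)M if t ≤ m/M. -/
/-!
Applying `Ψ` to the Kantorovich inequality `A + mM A⁻¹ ≤ (m + M) I`, which is `(x - m)(M - x) ≥ 0`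
on the spectrum of `A`, gives `Ψ A ≤ (m + M) I - mM X` for `X = Ψ (A⁻¹)`, and monotonicity of `Ψ`
and of the inverse gives `M⁻¹ ≤ X ≤ m⁻¹`. It remains to show `m + M - mM x - t / x ≤ ρ_{M,m}(t)` on
`[M⁻¹, m⁻¹]` and to transfer it to `X` by the functional calculus: `ρ_{M,m}(t)` is precisely the
maximum of the left-hand side over that interval, attained at `x = √(t / mM)` when this point lies
in the interval and at the nearer endpoint otherwise.
-/

open ContinuousLinearMap in
/-- A positive definite (positive invertible) bounded operator on a Hilbert space. -/
def IsPosDef {H : Type*} [NormedAddCommGroup H] [InnerProductSpace ℂ H] [CompleteSpace H]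
    (A : H →L[ℂ] H) : Prop := A.IsPositive ∧ IsUnit A

/-- A positive probability vector. -/
def IsProbVec {n : ℕ} (w : Fin n → ℝ) : Prop := (∀ i, 0 < w i) ∧ ∑ i, w i = 1

/-- An ordered mean: a family of weighted means of positive definite operators satisfying
homogeneity, monotonicity, joint concavity and the arithmetic-`G`-harmonic mean inequalities
with respect to the Loewner order. -/
structure OrderedMean (H : Type*) [NormedAddCommGroup H] [InnerProductSpace ℂ H]
    [CompleteSpace H] where
  G : ∀ n : ℕ, (Fin n → ℝ) → (Fin n → (H →L[ℂ] H)) → (H →L[ℂ] H)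
  posDef : ∀ n w A, IsProbVec w → (∀ i, IsPosDef (A i)) → IsPosDef (G n w A)
  homog : ∀ n w A (a : ℝ), IsProbVec w → (∀ i, IsPosDef (A i)) → 0 < a →
    G n w (fun i => a • A i) = a • G n w A
  mono : ∀ n w A B, IsProbVec w → (∀ i, IsPosDef (A i)) → (∀ i, IsPosDef (B i)) →
    (∀ i, B i ≤ A i) → G n w B ≤ G n w A
  concave : ∀ n w A B (s : ℝ), IsProbVec w → (∀ i, IsPosDef (A i)) → (∀ i, IsPosDef (B i)) →
    0 ≤ s → s ≤ 1 →
    (1 - s) • G n w A + s • G n w B ≤ G n w (fun i => (1 - s) • A i + s • B i)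
  harm_le : ∀ n w A, IsProbVec w → (∀ i, IsPosDef (A i)) →
    Ring.inverse (∑ i, w i • Ring.inverse (A i)) ≤ G n w A
  le_arith : ∀ n w A, IsProbVec w → (∀ i, IsPosDef (A i)) →
    G n w A ≤ ∑ i, w i • A i

/-- The parameterized ordered mean `G^μ`. -/
noncomputable def OrderedMean.pMean {H : Type*} [NormedAddCommGroup H] [InnerProductSpace ℂ H]
    [CompleteSpace H] (G : OrderedMean H) (μ : ℝ) (n : ℕ) (w : Fin n → ℝ)
    (A : Fin n → (H →L[ℂ] H)) : H →L[ℂ] H :=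
  if 0 ≤ μ then G.G n w (fun i => A i + μ • 1) - μ • 1
  else Ring.inverse (G.G n w (fun i => Ring.inverse (A i) + (-μ) • 1) - (-μ) • 1)

/-- The constant `ρ_{M,m}(t)`. -/
noncomputable def rhoConst (M m t : ℝ) : ℝ :=
  if M / m ≤ t then (1 - t) * m
  else if t ≤ m / M then (1 - t) * M
  else M + m - 2 * Real.sqrt (t * M * m)

variable {H : Type*} [NormedAddCommGroup H] [InnerProductSpace ℂ H] [CompleteSpace H]

lemma sub_rhoConst_le {m M t x : ℝ} (hm : 0 < m) (hM : 0 < M) (hx₁ : M⁻¹ ≤ x) (hx₂ : x ≤ m⁻¹) :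
    m + M - rhoConst M m t ≤ m * M * x + t * x⁻¹ := by
  obtain ⟨y, rfl⟩ : ∃ y, x = y⁻¹ := ⟨x⁻¹, (inv_inv x).symm⟩
  have hy : 0 < y := inv_pos.1 ((inv_pos.2 hM).trans_le hx₁)
  have hmy : m ≤ y := (inv_le_inv₀ hy hm).1 hx₂
  have hyM : y ≤ M := (inv_le_inv₀ hM hy).1 hx₁
  rw [inv_inv, ← sub_nonneg]
  unfold rhoConst
  split_ifs with h₁ h₂
  · rw [div_le_iff₀ hm] at h₁
    have e : m * M * y⁻¹ + t * y - (m + M - (1 - t) * m) = (t * y - M) * (y - m) / y := by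
      field_simp; ring
    rw [e]
    exact div_nonneg (mul_nonneg (by nlinarith) (by linarith)) hy.le
  · rw [le_div_iff₀ hM] at h₂
    have hty : t * y ≤ m := by rcases le_or_gt 0 t with ht | ht <;> nlinarith
    have e : m * M * y⁻¹ + t * y - (m + M - (1 - t) * M) = (m - t * y) * (M - y) / y := by
      field_simp; ring
    rw [e]
    exact div_nonneg (mul_nonneg (by linarith) (by linarith)) hy.le
  · push Not at h₁ h₂
    rw [div_lt_iff₀ hM] at h₂
    have ht : 0 < t := by nlinarith
    set s := Real.sqrt (t * M * m)
    have hs : s ^ 2 = t * M * m := Real.sq_sqrt (by positivity)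
    have e : m * M * y⁻¹ + t * y - (m + M - (M + m - 2 * s)) = (t * y - s) ^ 2 / (t * y) := by
      field_simp; linear_combination (-1) * hs
    rw [e]
    positivity

lemma ringInverse_smul_one {𝕜 A : Type*} [Field 𝕜] [Ring A] [Algebra 𝕜 A] (r : 𝕜) :
    Ring.inverse (r • (1 : A)) = r⁻¹ • 1 := by
  rcases eq_or_ne r 0 with rfl | hr
  · simp
  · have hu : IsUnit (r • (1 : A)) := by
      rw [← Algebra.algebraMap_eq_smul_one]; exact (IsUnit.mk0 r hr).map _
    symm
    rw [← one_mul (Ring.inverse _), Ring.eq_mul_inverse_iff_mul_eq _ _ _ hu, smul_mul_smul,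
      inv_mul_cancel₀ hr, one_smul, one_mul]

section

variable {A : Type*} [CStarAlgebra A] [PartialOrder A] [StarOrderedRing A]

lemma IsStrictlyPositive.continuousOn_inv_spectrum {a : A} (ha : IsStrictlyPositive a) :
    ContinuousOn (fun x : ℝ => x⁻¹) (spectrum ℝ a) :=
  continuousOn_inv₀.mono fun _ hx => (ha.spectrum_pos hx).ne'

lemma IsStrictlyPositive.cfc_mul_add_mul_inv {a : A} (ha : IsStrictlyPositive a) (p q : ℝ) :
    cfc (fun x : ℝ => p * x + q * x⁻¹) a = p • a + q • Ring.inverse a := by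
  have := ha.continuousOn_inv_spectrum
  rw [cfc_add .., cfc_const_mul .., cfc_const_mul .., cfc_id' ℝ a]
  congr 2
  exact cfc_ringInverse_id (R := ℝ) a ha.isUnit

lemma IsStrictlyPositive.smul_add_smul_ringInverse_le {a : A} (ha : IsStrictlyPositive a)
    {p q r : ℝ} (h : ∀ x ∈ spectrum ℝ a, p * x + q * x⁻¹ ≤ r) :
    p • a + q • Ring.inverse a ≤ r • 1 := by
  have := ha.continuousOn_inv_spectrum
  rw [← ha.cfc_mul_add_mul_inv, ← Algebra.algebraMap_eq_smul_one]
  exact (cfc_le_algebraMap_iff _ _ _ (by fun_prop) ha.isSelfAdjoint).2 h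

lemma IsStrictlyPositive.smul_one_le_smul_add_smul_ringInverse {a : A}
    (ha : IsStrictlyPositive a) {p q r : ℝ} (h : ∀ x ∈ spectrum ℝ a, r ≤ p * x + q * x⁻¹) :
    r • 1 ≤ p • a + q • Ring.inverse a := by
  have := ha.continuousOn_inv_spectrum
  rw [← ha.cfc_mul_add_mul_inv, ← Algebra.algebraMap_eq_smul_one]
  exact (algebraMap_le_cfc_iff _ _ _ (by fun_prop) ha.isSelfAdjoint).2 h

lemma IsSelfAdjoint.mem_Icc_of_mem_spectrum {a : A} (ha : IsSelfAdjoint a) {m M : ℝ}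
    (hlow : m • 1 ≤ a) (hup : a ≤ M • 1) {x : ℝ} (hx : x ∈ spectrum ℝ a) : x ∈ Set.Icc m M := by
  rw [← Algebra.algebraMap_eq_smul_one] at hlow hup
  exact ⟨(algebraMap_le_iff_le_spectrum ha).1 hlow x hx,
    (le_algebraMap_iff_spectrum_le ha).1 hup x hx⟩

lemma add_smul_ringInverse_le {a : A} {m M : ℝ} (hm : 0 < m) (hlow : m • 1 ≤ a)
    (hup : a ≤ M • 1) : a + (m * M) • Ring.inverse a ≤ (m + M) • 1 := by
  have ha : IsStrictlyPositive a := (IsStrictlyPositive.smul hm isStrictlyPositive_one).of_le hlow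
  have key : ∀ x ∈ spectrum ℝ a, 1 * x + (m * M) * x⁻¹ ≤ m + M := by
    intro x hx
    obtain ⟨hmx, hxM⟩ := ha.isSelfAdjoint.mem_Icc_of_mem_spectrum hlow hup hx
    have hx0 : 0 < x := hm.trans_le hmx
    have e : m + M - (1 * x + m * M * x⁻¹) = (x - m) * (M - x) / x := by
      field_simp; ring
    rw [← sub_nonneg, e]
    exact div_nonneg (mul_nonneg (by linarith) (by linarith)) hx0.le
  simpa using ha.smul_add_smul_ringInverse_le key

end

theorem psi_reverse_bound_general (Ψ : (H →L[ℂ] H) →ₗ[ℂ] (H →L[ℂ] H))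
    (hΨ1 : Ψ 1 = 1) (hΨpos : ∀ B : H →L[ℂ] H, 0 ≤ B → 0 ≤ Ψ B)
    (A : H →L[ℂ] H) (m M : ℝ) (hm : 0 < m) (hmM : m ≤ M)
    (hlow : m • (1 : H →L[ℂ] H) ≤ A) (hup : A ≤ M • (1 : H →L[ℂ] H))
    (t : ℝ) :
    Ψ A ≤ t • Ring.inverse (Ψ (Ring.inverse A)) + rhoConst M m t • (1 : H →L[ℂ] H) := by
  have hM : 0 < M := hm.trans_le hmM
  have hΨmono : Monotone Ψ := (PositiveLinearMap.mk₀ Ψ hΨpos).monotone'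
  have hm1 : IsStrictlyPositive (m • (1 : H →L[ℂ] H)) := .smul hm isStrictlyPositive_one
  have hApos : IsStrictlyPositive A := hm1.of_le hlow
  set X := Ψ (Ring.inverse A)
  have hX_low : M⁻¹ • 1 ≤ X := by
    simpa [ringInverse_smul_one, hΨ1] using
      hΨmono (CStarAlgebra.ringInverse_le_ringInverse hup hApos)
  have hX_up : X ≤ m⁻¹ • 1 := by
    simpa [ringInverse_smul_one, hΨ1] using
      hΨmono (CStarAlgebra.ringInverse_le_ringInverse hlow hm1)
  have hXpos : IsStrictlyPositive X :=
    (IsStrictlyPositive.smul (inv_pos.2 hM) isStrictlyPositive_one).of_le hX_low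
  have hΨA : Ψ A + (m * M) • X ≤ (m + M) • 1 := by
    simpa [hΨ1] using hΨmono (add_smul_ringInverse_le hm hlow hup)
  have hρ : (m + M - rhoConst M m t) • 1 ≤ (m * M) • X + t • Ring.inverse X :=
    hXpos.smul_one_le_smul_add_smul_ringInverse fun x hx =>
      have hx := hXpos.isSelfAdjoint.mem_Icc_of_mem_spectrum hX_low hX_up hx
      sub_rhoConst_le hm hM hx.1 hx.2
  rw [← sub_nonneg] at hΨA hρ ⊢
  convert add_nonneg hΨA hρ using 1
  module

theorem psi_reverse_bound (Ψ : (H →L[ℂ] H) →ₗ[ℂ] (H →L[ℂ] H))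
    (hΨ1 : Ψ 1 = 1) (hΨpos : ∀ B : H →L[ℂ] H, 0 ≤ B → 0 ≤ Ψ B)
    (A : H →L[ℂ] H) (hA : IsPosDef A) (m M : ℝ) (hm : 0 < m) (hmM : m ≤ M)
    (hlow : m • (1 : H →L[ℂ] H) ≤ A) (hup : A ≤ M • (1 : H →L[ℂ] H))
    (t : ℝ) (ht : 0 < t) :
    Ψ A ≤ t • Ring.inverse (Ψ (Ring.inverse A)) + rhoConst M m t • (1 : H →L[ℂ] H) :=
  psi_reverse_bound_general Ψ hΨ1 hΨpos A m M hm hmM hlow hup t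
end

section
/- The function f(x) = x − tMm/(M + m − x) on the interval [m, M] (for constants 0 < m ≤ M and t > 0) attains its maximum value ρ_{M,m}(t), where ρ_{M,m}(t) = (1−t)m if t ≥ M/m, ρ_{M,m}(t) = M + m − 2√(tMm) if m/M ≤ t ≤ M/m, and ρ_{M,m}(t) = (1−t)M if t ≤ m/M. -/
variable {H : Type*} [NormedAddCommGroup H] [InnerProductSpace ℂ H] [CompleteSpace H]

/-!
The substitution `s = M + m - x` maps `[m, M]` onto itself and turns `x - c / (M + m - x)` into
`M + m - (s + c / s)` with `c = t * M * m`, so the maximum of `f` is `M + m` minus the minimum of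
`s + c / s` on `[m, M]`. That function decreases up to `√c` and increases after it, so its minimum
is attained at `√c` clamped to `[m, M]`; the three cases `√c ≥ M`, `√c ≤ m` and `m < √c < M` are
the three cases `t ≥ M / m`, `t ≤ m / M` and `m / M < t < M / m` in the definition of `ρ`.
-/

open Set

lemma antitoneOn_add_div_Ioc_sqrt (c : ℝ) :
    AntitoneOn (fun s : ℝ => s + c / s) (Ioc 0 √c) := by
  rintro x ⟨hx, hxc⟩ y ⟨hy, hyc⟩ hxy
  have hxy_le : x * y ≤ c := by
    have hc : 0 ≤ c := Real.sqrt_pos.1 (hx.trans_le hxc) |>.le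
    calc x * y ≤ √c * √c := mul_le_mul hxc hyc hy.le (Real.sqrt_nonneg c)
      _ = c := Real.mul_self_sqrt hc
  have hdiff : x + c / x - (y + c / y) = (y - x) * (c - x * y) / (x * y) := by
    field_simp; ring
  show y + c / y ≤ x + c / x
  rw [← sub_nonneg, hdiff]
  exact div_nonneg (mul_nonneg (by linarith) (by linarith)) (mul_pos hx hy).le

lemma monotoneOn_add_div_Ici_sqrt {c : ℝ} (hc : 0 < c) :
    MonotoneOn (fun s : ℝ => s + c / s) (Ici √c) := by
  intro x (hxc : √c ≤ x) y (hyc : √c ≤ y) hxy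
  have hsc := Real.sqrt_pos.2 hc
  have hx := hsc.trans_le hxc
  have hy := hsc.trans_le hyc
  have hxy_ge : c ≤ x * y := by
    calc c = √c * √c := (Real.mul_self_sqrt hc.le).symm
      _ ≤ x * y := mul_le_mul hxc hyc hsc.le hx.le
  have hdiff : y + c / y - (x + c / x) = (y - x) * (x * y - c) / (x * y) := by
    field_simp; ring
  show x + c / x ≤ y + c / y
  rw [← sub_nonneg, hdiff]
  exact div_nonneg (mul_nonneg (by linarith) (by linarith)) (mul_pos hx hy).le

lemma isLeast_add_div_image_Icc {a b c : ℝ} (ha : 0 < a) (hab : a ≤ b) (hc : 0 < c) :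
    IsLeast ((fun s => s + c / s) '' Icc a b)
      (max a (min b √c) + c / max a (min b √c)) := by
  set s₀ := max a (min b √c)
  refine ⟨mem_image_of_mem _ ⟨le_max_left _ _, max_le hab (min_le_left _ _)⟩, ?_⟩
  rintro _ ⟨s, ⟨has, hsb⟩, rfl⟩
  rcases le_total s √c with hsc | hsc
  · have hs₀c : s₀ ≤ √c := max_le (has.trans hsc) (min_le_right _ _)
    have hss₀ : s ≤ s₀ := le_max_of_le_right (le_min hsb hsc)
    exact antitoneOn_add_div_Ioc_sqrt c ⟨ha.trans_le has, hsc⟩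
      ⟨ha.trans_le (has.trans hss₀), hs₀c⟩ hss₀
  · have hcs₀ : √c ≤ s₀ := le_max_of_le_right (le_min (hsc.trans hsb) le_rfl)
    have hs₀s : s₀ ≤ s := max_le has ((min_le_right _ _).trans hsc)
    exact monotoneOn_add_div_Ici_sqrt hc hcs₀ (hcs₀.trans hs₀s) hs₀s

lemma isGreatest_sub_div_image_Icc {a b c v : ℝ}
    (h : IsLeast ((fun s => s + c / s) '' Icc a b) v) :
    IsGreatest ((fun x => x - c / (a + b - x)) '' Icc a b) (a + b - v) := by
  have hrefl : (fun x => a + b - x) '' Icc a b = Icc a b := by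
    rw [image_const_sub_Icc, add_sub_cancel_right, add_sub_cancel_left]
  have := Antitone.map_isLeast (f := fun y => a + b - y) antitone_const_tsub h
  rw [← hrefl, image_image, image_image] at this
  simpa only [sub_add_eq_sub_sub, sub_sub_cancel] using this

lemma rhoConst_eq {M m t : ℝ} (hm : 0 < m) (hmM : m ≤ M) (ht : 0 < t) :
    rhoConst M m t =
      M + m - (max m (min M √(t * M * m)) + t * M * m / max m (min M √(t * M * m))) := by
  have hM : 0 < M := hm.trans_le hmM
  unfold rhoConst
  split_ifs with hMt htm
  · have hMc : M ≤ √(t * M * m) := by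
      rw [Real.le_sqrt hM.le (by positivity)]
      nlinarith [(div_le_iff₀ hm).1 hMt]
    rw [min_eq_left hMc, max_eq_right hmM]
    field_simp; ring
  · have hcm : √(t * M * m) ≤ m := by
      rw [Real.sqrt_le_left hm.le]
      nlinarith [(le_div_iff₀ hM).1 htm]
    rw [min_eq_right (hcm.trans hmM), max_eq_left hcm]
    field_simp; ring
  · rw [not_le] at hMt htm
    have hMc : √(t * M * m) ≤ M := by
      rw [Real.sqrt_le_left hM.le]
      nlinarith [(lt_div_iff₀ hm).1 hMt]
    have hcm : m ≤ √(t * M * m) := by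
      rw [Real.le_sqrt hm.le (by positivity)]
      nlinarith [(div_lt_iff₀ hM).1 htm]
    rw [min_eq_right hMc, max_eq_right hcm, Real.div_sqrt]
    ring

theorem rho_isGreatest (M m t : ℝ) (hm : 0 < m) (hmM : m ≤ M) (ht : 0 < t) :
    IsGreatest ((fun x : ℝ => x - t * M * m / (M + m - x)) '' Set.Icc m M)
      (rhoConst M m t) := by
  rw [rhoConst_eq hm hmM ht, add_comm M m]
  exact isGreatest_sub_div_image_Icc
    (isLeast_add_div_image_Icc hm hmM (mul_pos (mul_pos ht (hm.trans_le hmM)) hm))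
end

section
/- Let G be an ordered mean and for μ < 0 define G^μ(ω; A) := (G^{−μ}(ω; A₁⁻¹, …, Aₙ⁻¹))⁻¹ where G^ν for ν ≥ 0 is the parameterized ordered mean G^ν(ω; A) = G(ω; A + νI) − νI. Then for any a > 0 and μ < 0, G^μ(ω; aA₁, …, aAₙ) = a·G^{aμ}(ω; A₁, …, Aₙ). -/
variable {H : Type*} [NormedAddCommGroup H] [InnerProductSpace ℂ H] [CompleteSpace H]

/-! Since `(a • X)⁻¹ + ν • 1 = a⁻¹ • (X⁻¹ + (a * ν) • 1)`, the operators fed to `G` for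
`G^μ(a • A)` are `a⁻¹` times those fed to it for `G^{aμ}(A)`. Homogeneity of `G` pulls `a⁻¹`
out, the shift by `-μ` becomes `a⁻¹` times the shift by `-aμ`, and the outer inversion turns
the factor `a⁻¹` into `a`. -/

theorem Ring.inverse_smul {𝕜 A : Type*} [Field 𝕜] [Ring A] [Algebra 𝕜 A] {c : 𝕜} (hc : c ≠ 0)
    (x : A) : Ring.inverse (c • x) = c⁻¹ • Ring.inverse x := by
  have hc' : IsUnit (algebraMap 𝕜 A c) := hc.isUnit.map _
  have hinv : Ring.inverse (algebraMap 𝕜 A c) = algebraMap 𝕜 A c⁻¹ := by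
    simpa using Ring.inverse_unit ((Units.mk0 c hc).map (algebraMap 𝕜 A).toMonoidHom)
  rw [Algebra.smul_def, Ring.inverse_mul (.inl hc'), hinv, Algebra.smul_def]
  exact (Algebra.commutes _ _).symm

theorem isPosDef_iff_isStrictlyPositive {X : H →L[ℂ] H} : IsPosDef X ↔ IsStrictlyPositive X := by
  rw [IsPosDef, IsStrictlyPositive.iff_of_unital, ContinuousLinearMap.nonneg_iff_isPositive]

theorem pMean_homog_neg (G : OrderedMean H) {n : ℕ} (w : Fin n → ℝ) (hw : IsProbVec w)
    (A : Fin n → (H →L[ℂ] H)) (hA : ∀ i, IsPosDef (A i))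
    (a μ : ℝ) (ha : 0 < a) (hμ : μ < 0) :
    G.pMean μ n w (fun i => a • A i) = a • G.pMean (a * μ) n w A := by
  have haμ : a * μ < 0 := mul_neg_of_pos_of_neg ha hμ
  set B := fun i => Ring.inverse (A i) + (-(a * μ)) • (1 : H →L[ℂ] H)
  have hB : ∀ i, IsPosDef (B i) := fun i => isPosDef_iff_isStrictlyPositive.mpr <|
    (isPosDef_iff_isStrictlyPositive.mp (hA i)).ringInverse.add_nonneg
      (smul_nonneg (neg_pos.mpr haμ).le zero_le_one)
  have hshift : ∀ Y : H →L[ℂ] H, a⁻¹ • (Y - (-(a * μ)) • 1) = a⁻¹ • Y - (-μ) • 1 :=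
    fun Y => by rw [smul_sub, smul_smul, mul_neg, inv_mul_cancel_left₀ ha.ne']
  have hinv :
      (fun i => Ring.inverse (a • A i) + (-μ) • (1 : H →L[ℂ] H)) = fun i => a⁻¹ • B i := by
    funext i
    rw [Ring.inverse_smul ha.ne', smul_add, smul_smul, mul_neg, inv_mul_cancel_left₀ ha.ne']
  simp only [OrderedMean.pMean, if_neg hμ.not_ge, if_neg haμ.not_ge]
  rw [hinv, G.homog n w B a⁻¹ hw hB (inv_pos.mpr ha), ← hshift,
    Ring.inverse_smul (inv_ne_zero ha.ne'), inv_inv]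
end

section
/- For positive real numbers μ, ν > 0, t ∈ [0,1], p ∈ [−1,1] with p ≠ 0, and K = (μ+ν)²/(4μν): (1−t)μ + tν ≤ K·((1−t)μ^p + tν^p)^{1/p}, i.e., the weighted arithmetic mean of μ and ν is at most K times their weighted p-th power mean, for all p ≥ −1. -/
variable {H : Type*} [NormedAddCommGroup H] [InnerProductSpace ℂ H] [CompleteSpace H]

/-! The arithmetic mean is at most `K` times the harmonic mean (Kantorovich), and the harmonic
mean is the power mean of exponent `-1`, below every power mean of exponent `p ≥ -1`. -/

namespace Real

variable {w₁ w₂ x y : ℝ}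

theorem arith_mean2_mul_arith_mean2_inv_le (hx : 0 < x) (hy : 0 < y) (hw : w₁ + w₂ = 1) :
    (w₁ * x + w₂ * y) * (w₁ * x⁻¹ + w₂ * y⁻¹) ≤ (x + y) ^ 2 / (4 * x * y) := by
  rw [le_div_iff₀ (by positivity)]
  have hprod : (w₁ * x + w₂ * y) * (w₁ * x⁻¹ + w₂ * y⁻¹) * (4 * x * y)
      = 4 * ((w₁ * x + w₂ * y) * (w₁ * y + w₂ * x)) := by
    field_simp
  have hsum : (w₁ * x + w₂ * y) + (w₁ * y + w₂ * x) = x + y := by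
    linear_combination (x + y) * hw
  -- the two factors add up to `x + y`, so AM-GM bounds their product
  rw [hprod, ← hsum]
  nlinarith [sq_nonneg ((w₁ * x + w₂ * y) - (w₁ * y + w₂ * x))]

theorem weighted_mean2_pos (hw₁ : 0 ≤ w₁) (hw₂ : 0 ≤ w₂) (hw : w₁ + w₂ = 1)
    (hx : 0 < x) (hy : 0 < y) : 0 < w₁ * x + w₂ * y :=
  convex_Ioi (0 : ℝ) hx hy hw₁ hw₂ hw

theorem harm_mean2_le_geom_mean2_weighted (hw₁ : 0 ≤ w₁) (hw₂ : 0 ≤ w₂) (hw : w₁ + w₂ = 1)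
    (hx : 0 < x) (hy : 0 < y) : (w₁ * x⁻¹ + w₂ * y⁻¹)⁻¹ ≤ x ^ w₁ * y ^ w₂ := by
  rw [← inv_inv (x ^ w₁ * y ^ w₂), mul_inv, ← inv_rpow hx.le, ← inv_rpow hy.le]
  exact inv_anti₀ (by positivity) <|
    geom_mean_le_arith_mean2_weighted hw₁ hw₂ (inv_nonneg.2 hx.le) (inv_nonneg.2 hy.le) hw

theorem geom_mean2_le_rpow_mean2_weighted {p : ℝ} (hw₁ : 0 ≤ w₁) (hw₂ : 0 ≤ w₂)
    (hw : w₁ + w₂ = 1) (hx : 0 ≤ x) (hy : 0 ≤ y) (hp : 0 < p) :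
    x ^ w₁ * y ^ w₂ ≤ (w₁ * x ^ p + w₂ * y ^ p) ^ (1 / p) := by
  rw [one_div, le_rpow_inv_iff_of_pos (by positivity) (by positivity) hp,
    mul_rpow (by positivity) (by positivity), ← rpow_mul hx, ← rpow_mul hy, mul_comm w₁,
    mul_comm w₂, rpow_mul hx, rpow_mul hy]
  exact geom_mean_le_arith_mean2_weighted hw₁ hw₂ (by positivity) (by positivity) hw

theorem rpow_mean2_le_arith_mean2_weighted {q : ℝ} (hw₁ : 0 ≤ w₁) (hw₂ : 0 ≤ w₂)
    (hw : w₁ + w₂ = 1) (hx : 0 ≤ x) (hy : 0 ≤ y) (hq₀ : 0 < q) (hq₁ : q ≤ 1) :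
    (w₁ * x ^ q + w₂ * y ^ q) ^ (1 / q) ≤ w₁ * x + w₂ * y := by
  rw [one_div, rpow_inv_le_iff_of_pos (by positivity) (by positivity) hq₀]
  exact (concaveOn_rpow hq₀.le hq₁).2 hx hy hw₁ hw₂ hw

theorem harm_mean2_le_rpow_mean2_weighted {p : ℝ} (hw₁ : 0 ≤ w₁) (hw₂ : 0 ≤ w₂)
    (hw : w₁ + w₂ = 1) (hx : 0 < x) (hy : 0 < y) (hp : -1 ≤ p) (hp₀ : p ≠ 0) :
    (w₁ * x⁻¹ + w₂ * y⁻¹)⁻¹ ≤ (w₁ * x ^ p + w₂ * y ^ p) ^ (1 / p) := by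
  rcases hp₀.lt_or_gt with hneg | hpos
  · -- Inverting `x` and `y` turns the power mean of exponent `p` into the reciprocal of the one
    -- of exponent `-p ∈ (0, 1]`, which lies below the arithmetic mean by concavity.
    have hdual : (w₁ * x ^ p + w₂ * y ^ p) ^ (1 / p)
        = ((w₁ * x⁻¹ ^ (-p) + w₂ * y⁻¹ ^ (-p)) ^ (1 / -p))⁻¹ := by
      have hW := weighted_mean2_pos hw₁ hw₂ hw (rpow_pos_of_pos hx p) (rpow_pos_of_pos hy p)
      rw [inv_rpow hx.le, inv_rpow hy.le, ← rpow_neg hx.le, ← rpow_neg hy.le, neg_neg,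
        div_neg, rpow_neg hW.le, inv_inv]
    rw [hdual]
    refine inv_anti₀ ?_ (rpow_mean2_le_arith_mean2_weighted hw₁ hw₂ hw (inv_nonneg.2 hx.le)
      (inv_nonneg.2 hy.le) (neg_pos.2 hneg) (by linarith))
    exact rpow_pos_of_pos (weighted_mean2_pos hw₁ hw₂ hw (by positivity) (by positivity)) _
  · exact (harm_mean2_le_geom_mean2_weighted hw₁ hw₂ hw hx hy).trans
      (geom_mean2_le_rpow_mean2_weighted hw₁ hw₂ hw hx.le hy.le hpos)

end Real

theorem scalar_kantorovich_power_general (μ ν t p : ℝ) (hμ : 0 < μ) (hν : 0 < ν)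
    (ht0 : 0 ≤ t) (ht1 : t ≤ 1) (hpl : -1 ≤ p) (hp0 : p ≠ 0) :
    (1 - t) * μ + t * ν ≤
      ((μ + ν) ^ 2 / (4 * μ * ν)) * ((1 - t) * μ ^ p + t * ν ^ p) ^ (1 / p) := by
  have hw₁ : 0 ≤ 1 - t := by linarith
  have hw : 1 - t + t = 1 := by ring
  have hharm := Real.weighted_mean2_pos hw₁ ht0 hw (inv_pos.2 hμ) (inv_pos.2 hν)
  calc (1 - t) * μ + t * ν ≤ ((μ + ν) ^ 2 / (4 * μ * ν)) * ((1 - t) * μ⁻¹ + t * ν⁻¹)⁻¹ :=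
        (le_mul_inv_iff₀ hharm).2 (Real.arith_mean2_mul_arith_mean2_inv_le hμ hν hw)
    _ ≤ ((μ + ν) ^ 2 / (4 * μ * ν)) * ((1 - t) * μ ^ p + t * ν ^ p) ^ (1 / p) := by
        gcongr
        exact Real.harm_mean2_le_rpow_mean2_weighted hw₁ ht0 hw hμ hν hpl hp0

theorem scalar_kantorovich_power (μ ν t p : ℝ) (hμ : 0 < μ) (hν : 0 < ν)
    (ht0 : 0 ≤ t) (ht1 : t ≤ 1) (hpl : -1 ≤ p) (hpu : p ≤ 1) (hp0 : p ≠ 0) :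
    (1 - t) * μ + t * ν ≤
      ((μ + ν) ^ 2 / (4 * μ * ν)) * ((1 - t) * μ ^ p + t * ν ^ p) ^ (1 / p) :=
  scalar_kantorovich_power_general μ ν t p hμ hν ht0 ht1 hpl hp0
end
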